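/- Let α ∈ (1/2, 1) and s > (1−α)/4 with s < 1/4. Then sup over n ∈ ℤ of the sum over pairs of nonzero integers (k, j) with 0 < |kj| ≤ |n|^{2−2α} of 1/(⟨n⟩^{2s} ⟨n+k⟩^{2s} ⟨n+j⟩^{2s} ⟨n+k+j⟩^{2s}) is finite. -/

import Mathlib

/-!
Put `ε = 4s / (1 - α)`, so that `ε > 1` exactly when `s > (1 - α) / 4`. Each term of the sum is
bounded by `C |k|^(-ε) |j|^(-ε)` uniformly in `n`, and this family is summable over `ℤ²`.
Indeed all four brackets are `≳ |n|`: either `|k|, |j| ≤ |n| / 4`, or `|n| < 4|k| ≤ 4|n|^(2-2α)`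
bounds `|n|` because `α > 1/2`. Hence the term is `≲ |n|^(-8s) = (|n|^(2-2α))^(-ε) ≤ |kj|^(-ε)`.
-/

open Real

/-- Japanese bracket of an integer. -/
noncomputable def jb (m : ℤ) : ℝ := Real.sqrt (1 + (m : ℝ) ^ 2)

lemma one_le_jb (m : ℤ) : 1 ≤ jb m :=
  Real.one_le_sqrt.2 (le_add_of_nonneg_right (sq_nonneg _))

lemma jb_pos (m : ℤ) : 0 < jb m := one_pos.trans_le (one_le_jb m)

lemma jb_prod_pos (s : ℝ) (n k j : ℤ) :
    0 < jb n ^ (2 * s) * jb (n + k) ^ (2 * s) * jb (n + j) ^ (2 * s) *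
      jb (n + k + j) ^ (2 * s) := by
  have := jb_pos n; have := jb_pos (n + k); have := jb_pos (n + j); have := jb_pos (n + k + j)
  positivity

lemma abs_le_jb (m : ℤ) : |(m : ℝ)| ≤ jb m := by
  rw [jb, ← Real.sqrt_sq_eq_abs]
  exact Real.sqrt_le_sqrt (by linarith)

lemma le_rpow_inv_of_le_mul_rpow {x a p : ℝ} (hx : 0 ≤ x) (ha : 0 ≤ a) (hp : 0 < p)
    (h : x ≤ a * x ^ (1 - p)) : x ≤ a ^ p⁻¹ := by
  rcases hx.eq_or_lt with rfl | hx
  · exact rpow_nonneg ha _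
  rw [le_rpow_inv_iff_of_pos hx.le ha hp]
  rw [← div_le_iff₀ (rpow_pos_of_pos hx _), ← rpow_one_sub' hx.le (by linarith)] at h
  simpa using h

lemma exists_tsum_le_of_le_summable {ι β : Type*} {f : ι → β → ℝ} {g : β → ℝ} (hg : Summable g)
    (hf : ∀ i b, 0 ≤ f i b) (hfg : ∀ i b, f i b ≤ g b) : ∃ C, ∀ i, ∑' b, f i b ≤ C :=
  ⟨∑' b, g b, fun i => (hg.of_nonneg_of_le (hf i) (hfg i)).tsum_le_tsum (hfg i) hg⟩

section LowInteraction

variable {α s : ℝ} {n k j : ℤ}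

lemma abs_le_mul_jb (hα : 1 / 2 < α) (hk : k ≠ 0) (hj : j ≠ 0)
    (hkj : |(k : ℝ)| * |(j : ℝ)| ≤ |(n : ℝ)| ^ (2 - 2 * α)) {m : ℤ}
    (hm : |(m : ℝ) - n| ≤ |(k : ℝ)| + |(j : ℝ)|) :
    |(n : ℝ)| ≤ 2 * 4 ^ (2 * α - 1)⁻¹ * jb m := by
  have hk1 : 1 ≤ |(k : ℝ)| := by exact_mod_cast Int.one_le_abs hk
  have hj1 : 1 ≤ |(j : ℝ)| := by exact_mod_cast Int.one_le_abs hj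
  have hN : (1 : ℝ) ≤ 4 ^ (2 * α - 1)⁻¹ := one_le_rpow (by norm_num) (by simp; linarith)
  have hjb := one_le_jb m
  by_cases hsmall : 4 * |(k : ℝ)| ≤ |(n : ℝ)| ∧ 4 * |(j : ℝ)| ≤ |(n : ℝ)|
  · have hmn := abs_sub_abs_le_abs_sub (n : ℝ) m
    rw [abs_sub_comm] at hmn
    nlinarith [abs_le_jb m]
  · have hn : |(n : ℝ)| ≤ 4 ^ (2 * α - 1)⁻¹ := by
      refine le_rpow_inv_of_le_mul_rpow (abs_nonneg _) (by norm_num) (by linarith) ?_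
      rw [show 1 - (2 * α - 1) = 2 - 2 * α by ring]
      rcases not_and_or.1 hsmall with h | h <;> nlinarith
    nlinarith

lemma abs_rpow_le_mul_jb_prod (hα : 1 / 2 < α) (hs : 0 ≤ s) (hk : k ≠ 0) (hj : j ≠ 0)
    (hkj : |(k : ℝ)| * |(j : ℝ)| ≤ |(n : ℝ)| ^ (2 - 2 * α)) :
    (|(n : ℝ)| ^ (2 * s)) ^ 4 ≤ ((2 * 4 ^ (2 * α - 1)⁻¹) ^ (2 * s)) ^ 4 *
      (jb n ^ (2 * s) * jb (n + k) ^ (2 * s) * jb (n + j) ^ (2 * s) *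
        jb (n + k + j) ^ (2 * s)) := by
  set c := (2 * 4 ^ (2 * α - 1)⁻¹ : ℝ) ^ (2 * s)
  have key : ∀ m : ℤ, |(m : ℝ) - n| ≤ |(k : ℝ)| + |(j : ℝ)| →
      |(n : ℝ)| ^ (2 * s) ≤ c * jb m ^ (2 * s) := fun m hm => by
    rw [← mul_rpow (by positivity) (jb_pos m).le]
    exact rpow_le_rpow (abs_nonneg _) (abs_le_mul_jb hα hk hj hkj hm) (by positivity)
  have hc : 0 ≤ c := by positivity
  have := jb_pos n; have := jb_pos (n + k); have := jb_pos (n + j)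
  have h₀ := key n (by simp; positivity)
  have h₁ := key (n + k) (by push_cast; simp)
  have h₂ := key (n + j) (by push_cast; simp)
  have h₃ := key (n + k + j) <| by
    push_cast
    rw [show (n + k + j - n : ℝ) = k + j by ring]
    exact abs_add_le _ _
  calc (|(n : ℝ)| ^ (2 * s)) ^ 4
      = |(n : ℝ)| ^ (2 * s) * |(n : ℝ)| ^ (2 * s) * |(n : ℝ)| ^ (2 * s) * |(n : ℝ)| ^ (2 * s) := by
        ring
    _ ≤ (c * jb n ^ (2 * s)) * (c * jb (n + k) ^ (2 * s)) * (c * jb (n + j) ^ (2 * s)) *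
          (c * jb (n + k + j) ^ (2 * s)) := by gcongr
    _ = _ := by ring

lemma one_div_jb_prod_le (hα : 1 / 2 < α) (hα1 : α < 1) (hs : 0 ≤ s) (hk : k ≠ 0) (hj : j ≠ 0)
    (hkj : |(k : ℝ) * j| ≤ |(n : ℝ)| ^ (2 - 2 * α)) :
    1 / (jb n ^ (2 * s) * jb (n + k) ^ (2 * s) * jb (n + j) ^ (2 * s) * jb (n + k + j) ^ (2 * s))
      ≤ ((2 * 4 ^ (2 * α - 1)⁻¹) ^ (2 * s)) ^ 4 *
        (|(k : ℝ)| ^ (-(4 * s / (1 - α))) * |(j : ℝ)| ^ (-(4 * s / (1 - α)))) := by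
  rw [abs_mul] at hkj
  have hk0 : 0 < |(k : ℝ)| := by positivity
  have hj0 : 0 < |(j : ℝ)| := by positivity
  have hX : (|(k : ℝ)| * |(j : ℝ)|) ^ (4 * s / (1 - α)) ≤ (|(n : ℝ)| ^ (2 * s)) ^ 4 :=
    calc (|(k : ℝ)| * |(j : ℝ)|) ^ (4 * s / (1 - α))
        ≤ (|(n : ℝ)| ^ (2 - 2 * α)) ^ (4 * s / (1 - α)) :=
          rpow_le_rpow (by positivity) hkj (div_nonneg (by positivity) (by linarith))
      _ = (|(n : ℝ)| ^ (2 * s)) ^ 4 := by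
          rw [← rpow_mul (abs_nonneg _), ← rpow_mul_natCast (abs_nonneg _)]
          congr 1
          field_simp [(sub_pos.2 hα1).ne']
          ring
  rw [rpow_neg hk0.le, rpow_neg hj0.le, ← mul_inv, ← mul_rpow hk0.le hj0.le, ← div_eq_mul_inv,
    div_le_div_iff₀ (jb_prod_pos s n k j) (by positivity), one_mul]
  exact hX.trans (abs_rpow_le_mul_jb_prod hα hs hk hj hkj)

end LowInteraction

theorem stmt_7_general (α s : ℝ) (hα : 1 / 2 < α) (hα1 : α < 1)
    (hs : (1 - α) / 4 < s) :
    ∃ C : ℝ, ∀ n : ℤ,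
      (∑' p : ℤ × ℤ,
        if p.1 ≠ 0 ∧ p.2 ≠ 0 ∧ (|p.1 * p.2| : ℝ) ≤ (|n| : ℝ) ^ (2 - 2 * α) then
          1 / (jb n ^ (2 * s) * jb (n + p.1) ^ (2 * s) * jb (n + p.2) ^ (2 * s)
            * jb (n + p.1 + p.2) ^ (2 * s))
        else 0) ≤ C := by
  have hs0 : 0 ≤ s := by linarith
  have hε : 1 < 4 * s / (1 - α) := by rw [lt_div_iff₀ (by linarith)]; linarith
  have hsum := summable_abs_int_rpow hε
  refine exists_tsum_le_of_le_summable
    ((hsum.mul_of_nonneg hsum (fun _ => by positivity) fun _ => by positivity).mul_left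
      (((2 * 4 ^ (2 * α - 1)⁻¹) ^ (2 * s)) ^ 4))
    (fun n p => ?_) fun n p => ?_
  · split_ifs
    · exact one_div_nonneg.2 (jb_prod_pos s n p.1 p.2).le
    · rfl
  · split_ifs with h
    · exact one_div_jb_prod_le hα hα1 hs0 h.1 h.2.1 h.2.2
    · positivity

/-- uniform-in-`n` bound on the low-interaction sum in the Strichartz estimate.
Here `p.1 = k` and `p.2 = j`. -/
theorem stmt_7 (α s : ℝ) (hα : 1 / 2 < α) (hα1 : α < 1)
    (hs : (1 - α) / 4 < s) (hs4 : s < 1 / 4) :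
    ∃ C : ℝ, ∀ n : ℤ,
      (∑' p : ℤ × ℤ,
        if p.1 ≠ 0 ∧ p.2 ≠ 0 ∧ (|p.1 * p.2| : ℝ) ≤ (|n| : ℝ) ^ (2 - 2 * α) then
          1 / (jb n ^ (2 * s) * jb (n + p.1) ^ (2 * s) * jb (n + p.2) ^ (2 * s)
            * jb (n + p.1 + p.2) ^ (2 * s))
        else 0) ≤ C :=
  stmt_7_general α s hα hα1 hs
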